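/- Let L be an S-Noetherian r-lattice. Then every S-irreducible element of L is S-primary. -/
import Mathlib


open CompleteLattice

class MulLattice (L : Type*) extends CompleteLattice L, CommMonoid L where
  mul_sSup : ∀ (a : L) (s : Set L), a * sSup s = ⨆ b ∈ s, a * b
  one_eq_top : (1 : L) = ⊤

variable {L : Type*} [MulLattice L]

/-- Residual `(a : b)`. -/
def mres (a b : L) : L := sSup {x : L | x * b ≤ a}

/-- Lattice-theoretic radical. -/
def rad (a : L) : L :=
  sSup {x : L | IsCompactElement x ∧ ∃ n : ℕ, 0 < n ∧ x ^ n ≤ a}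

def IsMeetPrincipal (m : L) : Prop :=
  ∀ a b : L, a ⊓ m * b = m * (mres a m ⊓ b)

def IsJoinPrincipal (m : L) : Prop :=
  ∀ a b : L, a ⊔ mres b m = mres (a * m ⊔ b) m

def IsPrincipal (m : L) : Prop := IsMeetPrincipal m ∧ IsJoinPrincipal m

/-- A multiplicatively closed subset of compact elements with `1 ∈ S`, `0 ∉ S`. -/
def MultClosed (S : Set L) : Prop :=
  (∀ s ∈ S, IsCompactElement s) ∧ (1 : L) ∈ S ∧ (⊥ : L) ∉ S ∧
    ∀ s ∈ S, ∀ t ∈ S, s * t ∈ S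

def SCompact (S : Set L) (a : L) : Prop :=
  ∃ s ∈ S, ∃ b : L, IsCompactElement b ∧ s * a ≤ b ∧ b ≤ a

def SPrime (S : Set L) (p : L) : Prop :=
  p ≠ ⊤ ∧ (∀ t ∈ S, ¬ t ≤ p) ∧
    ∃ s ∈ S, ∀ a b : L, a * b ≤ p → s * a ≤ p ∨ s * b ≤ p

def SPrimary (S : Set L) (q : L) : Prop :=
  q ≠ ⊤ ∧ (∀ t ∈ S, ¬ t ≤ q) ∧
    ∃ s ∈ S, ∀ c d : L, c * d ≤ q → s * c ≤ q ∨ s * d ≤ rad q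

def Ssat (S : Set L) (a : L) : L := sSup {x : L | ∃ s ∈ S, s * x ≤ a}

class RLattice (L : Type*) extends MulLattice L where
  modular : ∀ a b c : L, a ≤ c → a ⊔ (b ⊓ c) = (a ⊔ b) ⊓ c
  principally_generated : ∀ a : L, a = sSup {m : L | IsPrincipal m ∧ m ≤ a}
  compactly_generated : ∀ a : L, a = sSup {c : L | IsCompactElement c ∧ c ≤ a}
  top_compact : IsCompactElement (⊤ : L)

class CLattice (L : Type*) extends MulLattice L where
  compactly_generated : ∀ a : L, a = sSup {c : L | IsCompactElement c ∧ c ≤ a}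
  top_compact : IsCompactElement (⊤ : L)
  compact_mul : ∀ a b : L, IsCompactElement a → IsCompactElement b →
    IsCompactElement (a * b)

def SIrreducible (S : Set L) (q : L) : Prop :=
  (∀ t ∈ S, ¬ t ≤ q) ∧
    ∀ s ∈ S, ∀ a b : L, s * (a ⊓ b) ≤ q → q ≤ a ⊓ b →
      ∃ s' ∈ S, s * s' * a ≤ q ∨ s * s' * b ≤ q

/-! ### Auxiliary lemmas -/

lemma ml_mul_sup (a b c : L) : a * (b ⊔ c) = a * b ⊔ a * c := by
  rw [← sSup_pair, MulLattice.mul_sSup, iSup_pair]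

lemma ml_mono (a : L) {b c : L} (h : b ≤ c) : a * b ≤ a * c := by
  have : a * c = a * b ⊔ a * c := by rw [← ml_mul_sup, sup_eq_right.mpr h]
  rw [this]; exact le_sup_left

lemma ml_mono' {b c : L} (h : b ≤ c) (a : L) : b * a ≤ c * a := by
  rw [mul_comm b a, mul_comm c a]; exact ml_mono a h

lemma ml_mul_top (x : L) : x * ⊤ = x := by
  rw [← MulLattice.one_eq_top, mul_one]

lemma ml_le_right (a b : L) : a * b ≤ b := by
  calc a * b ≤ ⊤ * b := ml_mono' le_top b
  _ = b := by rw [mul_comm, ml_mul_top]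

lemma ml_le_left (a b : L) : a * b ≤ a := by rw [mul_comm]; exact ml_le_right b a

lemma mres_mul_le (a b : L) : mres a b * b ≤ a := by
  rw [mres, mul_comm, MulLattice.mul_sSup]
  exact iSup_le fun x => iSup_le fun hx => by rw [mul_comm]; exact hx

lemma le_mres {x a b : L} : x ≤ mres a b ↔ x * b ≤ a := by
  constructor
  · intro h
    calc x * b ≤ mres a b * b := ml_mono' h b
    _ ≤ a := mres_mul_le a b
  · intro h; exact _root_.le_sSup h

lemma mres_mres (a m e : L) : mres (mres a m) e = mres a (m * e) := by
  apply le_antisymm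
  · rw [le_mres]
    calc mres (mres a m) e * (m * e) = (mres (mres a m) e * e) * m := by
          rw [mul_comm m e, ← mul_assoc]
    _ ≤ mres a m * m := ml_mono' (mres_mul_le _ _) m
    _ ≤ a := mres_mul_le a m
  · rw [le_mres, le_mres]
    calc mres a (m * e) * e * m = mres a (m * e) * (m * e) := by
          rw [mul_assoc, mul_comm e m]
    _ ≤ a := mres_mul_le _ _

lemma top_meetPrincipal : IsMeetPrincipal (⊤ : L) := by
  intro a b
  have hres : mres a (⊤ : L) = a := by
    apply le_antisymm
    · have h := mres_mul_le a (⊤ : L)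
      rwa [ml_mul_top] at h
    · exact _root_.le_sSup (by simp [Set.mem_setOf_eq, ml_mul_top])
  rw [hres, mul_comm (⊤ : L) b, ml_mul_top, mul_comm (⊤ : L) (a ⊓ b), ml_mul_top]

lemma meetPrincipal_mul {m e : L} (hm : IsMeetPrincipal m) (he : IsMeetPrincipal e) :
    IsMeetPrincipal (m * e) := by
  intro a b
  calc a ⊓ (m * e) * b = a ⊓ m * (e * b) := by rw [mul_assoc]
  _ = m * (mres a m ⊓ e * b) := hm a (e * b)
  _ = m * (e * (mres (mres a m) e ⊓ b)) := by rw [he (mres a m) b]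
  _ = (m * e) * (mres a (m * e) ⊓ b) := by rw [← mul_assoc, mres_mres]

lemma meetPrincipal_pow {m : L} (hm : IsMeetPrincipal m) (n : ℕ) :
    IsMeetPrincipal (m ^ n) := by
  induction n with
  | zero => rw [pow_zero, MulLattice.one_eq_top]; exact top_meetPrincipal
  | succ k ih => rw [pow_succ]; exact meetPrincipal_mul ih hm

lemma ml_pow_mono {x y : L} (h : x ≤ y) (n : ℕ) : x ^ n ≤ y ^ n := by
  induction n with
  | zero => simp
  | succ k ih =>
    rw [pow_succ, pow_succ]
    calc x ^ k * x ≤ x ^ k * y := ml_mono _ h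
    _ ≤ y ^ k * y := ml_mono' ih y

lemma ml_pow_le_self {x : L} {n : ℕ} (hn : 0 < n) : x ^ n ≤ x := by
  obtain ⟨k, rfl⟩ : ∃ k, n = k + 1 := ⟨n - 1, (Nat.succ_pred_eq_of_pos hn).symm⟩
  rw [pow_succ]; exact ml_le_right _ _

section RLat

variable {M : Type*} [RLattice M]

lemma le_rad_of_pow_le {x q : M} {n : ℕ} (hn : 0 < n) (h : x ^ n ≤ q) : x ≤ rad q := by
  have hx : x = sSup {c : M | IsCompactElement c ∧ c ≤ x} :=
    RLattice.compactly_generated x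
  conv_lhs => rw [hx]
  apply _root_.sSup_le
  rintro c ⟨hc, hcx⟩
  exact _root_.le_sSup ⟨hc, n, hn, le_trans (ml_pow_mono hcx n) h⟩

lemma ssat_uniform (S : Set M) (hS : MultClosed S) (hN : ∀ a : M, SCompact S a) (a : M) :
    ∃ t ∈ S, t * Ssat S a ≤ a := by
  obtain ⟨s, hs, b, hb, hsb, hba⟩ := hN (Ssat S a)
  have hdir : DirectedOn (· ≤ ·) {x : M | ∃ s ∈ S, s * x ≤ a} := by
    rintro x ⟨u, hu, hux⟩ y ⟨v, hv, hvy⟩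
    refine ⟨x ⊔ y, ⟨u * v, hS.2.2.2 u hu v hv, ?_⟩, le_sup_left, le_sup_right⟩
    rw [ml_mul_sup]
    apply sup_le
    · calc u * v * x = v * (u * x) := by rw [mul_comm u v, mul_assoc]
      _ ≤ v * a := ml_mono v hux
      _ ≤ a := ml_le_right v a
    · calc u * v * y = u * (v * y) := mul_assoc u v y
      _ ≤ u * a := ml_mono u hvy
      _ ≤ a := ml_le_right u a
  have hne : Set.Nonempty {x : M | ∃ s ∈ S, s * x ≤ a} :=
    ⟨a, 1, hS.2.1, by rw [one_mul]⟩
  obtain ⟨x, ⟨u, hu, hux⟩, hbx⟩ :=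
    (isCompactElement_iff_le_of_directed_sSup_le M b).mp hb _ hne hdir hba
  refine ⟨u * s, hS.2.2.2 u hu s hs, ?_⟩
  calc u * s * Ssat S a = u * (s * Ssat S a) := mul_assoc _ _ _
  _ ≤ u * b := ml_mono u hsb
  _ ≤ u * x := ml_mono u hbx
  _ ≤ a := hux

end RLat

theorem stmt16 {M : Type*} [RLattice M] (S : Set M) (hS : MultClosed S)
    (hN : ∀ a : M, SCompact S a) (q : M) (hq : SIrreducible S q) :
    SPrimary S q := by
  obtain ⟨t₁, ht₁S, ht₁⟩ := ssat_uniform S hS hN q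
  obtain ⟨t₂, ht₂S, ht₂⟩ := ssat_uniform S hS hN (rad q)
  have hqtop : q ≠ ⊤ := by
    intro h
    exact hq.1 1 hS.2.1 (by rw [MulLattice.one_eq_top, h])
  refine ⟨hqtop, hq.1, t₁ * t₂, hS.2.2.2 t₁ ht₁S t₂ ht₂S, ?_⟩
  intro c d hcd
  by_cases hc : ∃ u ∈ S, u * c ≤ q
  · left
    obtain ⟨u, hu, huc⟩ := hc
    have hcs : c ≤ Ssat S q := _root_.le_sSup ⟨u, hu, huc⟩
    calc t₁ * t₂ * c = t₁ * (t₂ * c) := mul_assoc _ _ _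
    _ ≤ t₁ * c := ml_mono t₁ (ml_le_right t₂ c)
    _ ≤ t₁ * Ssat S q := ml_mono t₁ hcs
    _ ≤ q := ht₁
  · right
    have hd : d ≤ Ssat S (rad q) := by
      have hdgen : d = sSup {m : M | IsPrincipal m ∧ m ≤ d} :=
        RLattice.principally_generated d
      conv_lhs => rw [hdgen]
      apply _root_.sSup_le
      rintro m ⟨hmP, hmd⟩
      apply _root_.le_sSup
      show ∃ u ∈ S, u * m ≤ rad q
      by_contra hm
      -- the chain (q : mⁿ)
      have hcm : c * m ≤ q := le_trans (ml_mono c hmd) hcd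
      set C : Set M := Set.range (fun n : ℕ => mres q (m ^ n)) with hC
      have hmono : Monotone (fun n : ℕ => mres q (m ^ n)) := by
        apply monotone_nat_of_le_succ
        intro n
        rw [le_mres]
        calc mres q (m ^ n) * m ^ (n + 1) = (mres q (m ^ n) * m ^ n) * m := by
              rw [pow_succ, ← mul_assoc]
        _ ≤ q * m := ml_mono' (mres_mul_le _ _) m
        _ ≤ q := ml_le_left q m
      have hdirC : DirectedOn (· ≤ ·) C := by
        rintro x ⟨i, rfl⟩ y ⟨j, rfl⟩
        exact ⟨mres q (m ^ max i j), ⟨max i j, rfl⟩,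
          hmono (le_max_left i j), hmono (le_max_right i j)⟩
      obtain ⟨s₀, hs₀, b, hbcomp, hs₀b, hbC⟩ := hN (sSup C)
      obtain ⟨x, ⟨n, rfl⟩, hbx⟩ :=
        (isCompactElement_iff_le_of_directed_sSup_le M b).mp hbcomp C
          ⟨mres q (m ^ 0), 0, rfl⟩ hdirC hbC
      have hstab : s₀ * mres q (m ^ (n + 1)) ≤ mres q (m ^ n) := by
        calc s₀ * mres q (m ^ (n + 1)) ≤ s₀ * sSup C := ml_mono s₀ (_root_.le_sSup ⟨n + 1, rfl⟩)
        _ ≤ b := hs₀b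
        _ ≤ mres q (m ^ n) := hbx
      have hkey : s₀ * (mres q m ⊓ m ^ n) ≤ q := by
        have hmp : IsMeetPrincipal (m ^ n) := meetPrincipal_pow hmP.1 n
        have h1 : mres q m ⊓ m ^ n = m ^ n * mres q (m ^ (n + 1)) := by
          have h := hmp (mres q m) ⊤
          rw [ml_mul_top, inf_top_eq, mres_mres, ← pow_succ'] at h
          exact h
        calc s₀ * (mres q m ⊓ m ^ n) = m ^ n * (s₀ * mres q (m ^ (n + 1))) := by
              rw [h1, ← mul_assoc, mul_comm s₀ (m ^ n), mul_assoc]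
        _ ≤ m ^ n * mres q (m ^ n) := ml_mono _ hstab
        _ ≤ q := by rw [mul_comm]; exact mres_mul_le q (m ^ n)
      have hcle : c ≤ mres q m := le_mres.mpr hcm
      have hmod1 : q ⊔ (c ⊓ (q ⊔ m ^ n)) = (q ⊔ c) ⊓ (q ⊔ m ^ n) :=
        RLattice.modular q c (q ⊔ m ^ n) le_sup_left
      have hmod2 : q ⊔ (m ^ n ⊓ mres q m) = (q ⊔ m ^ n) ⊓ mres q m :=
        RLattice.modular q (m ^ n) (mres q m) (le_mres.mpr (ml_le_left q m))
      have hle : (q ⊔ c) ⊓ (q ⊔ m ^ n) ≤ q ⊔ (mres q m ⊓ m ^ n) := by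
        rw [← hmod1]
        apply sup_le le_sup_left
        calc c ⊓ (q ⊔ m ^ n) ≤ mres q m ⊓ (q ⊔ m ^ n) := inf_le_inf_right _ hcle
        _ = (q ⊔ m ^ n) ⊓ mres q m := inf_comm _ _
        _ = q ⊔ (m ^ n ⊓ mres q m) := hmod2.symm
        _ = q ⊔ (mres q m ⊓ m ^ n) := by rw [inf_comm (m ^ n) (mres q m)]
      have hsmall : s₀ * ((q ⊔ c) ⊓ (q ⊔ m ^ n)) ≤ q := by
        calc s₀ * ((q ⊔ c) ⊓ (q ⊔ m ^ n)) ≤ s₀ * (q ⊔ (mres q m ⊓ m ^ n)) := ml_mono s₀ hle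
        _ = s₀ * q ⊔ s₀ * (mres q m ⊓ m ^ n) := ml_mul_sup _ _ _
        _ ≤ q := sup_le (ml_le_right s₀ q) hkey
      obtain ⟨s', hs', hcase⟩ :=
        hq.2 s₀ hs₀ (q ⊔ c) (q ⊔ m ^ n) hsmall (le_inf le_sup_left le_sup_left)
      have hss' : s₀ * s' ∈ S := hS.2.2.2 s₀ hs₀ s' hs'
      rcases hcase with h | h
      · exact hc ⟨s₀ * s', hss', le_trans (ml_mono _ le_sup_right) h⟩
      · have hmn : (s₀ * s') * m ^ n ≤ q := le_trans (ml_mono _ le_sup_right) h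
        cases n with
        | zero =>
          rw [pow_zero, mul_one] at hmn
          exact hq.1 (s₀ * s') hss' hmn
        | succ k =>
          have hpow : (s₀ * s' * m) ^ (k + 1) ≤ q := by
            calc (s₀ * s' * m) ^ (k + 1) = (s₀ * s') ^ (k + 1) * m ^ (k + 1) :=
                  mul_pow _ _ _
            _ ≤ (s₀ * s') * m ^ (k + 1) := ml_mono' (ml_pow_le_self (Nat.succ_pos k)) _
            _ ≤ q := hmn
          exact hm ⟨s₀ * s', hss', le_rad_of_pow_le (Nat.succ_pos k) hpow⟩
    calc t₁ * t₂ * d = t₁ * (t₂ * d) := mul_assoc _ _ _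
    _ ≤ t₂ * d := ml_le_right t₁ _
    _ ≤ t₂ * Ssat S (rad q) := ml_mono t₂ hd
    _ ≤ rad q := ht₂
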